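/- Let τ¹, τ² ∈ T_n be segmentations with D_{τ¹} = D_{τ²} and (1/n) d∞^{(1)}(τ¹,τ²) < Λ̲_{τ¹}/3. Then (2 / (3 Λ̄_{τ¹})) · (1/n) d∞^{(1)}(τ¹,τ²) ≤ d_F(τ¹,τ²)². -/

import Mathlib

open MeasureTheory ProbabilityTheory

/-- A segmentation of `{1, …, n}` with `D` segments: integers
`0 = t 0 < t 1 < ⋯ < t D = n`. -/
structure Seg (n : ℕ) where
  D : ℕ
  t : ℕ → ℕ
  hD : 0 < D
  h0 : t 0 = 0
  hn : t D = n
  hmono : ∀ ℓ < D, t ℓ < t (ℓ + 1)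

namespace Seg

variable {n : ℕ}

/-- The `ℓ`-th segment (`0`-based) of a segmentation, as a set of `0`-based indices:
it corresponds to the paper's segment `λ_{ℓ+1} = {t ℓ + 1, …, t (ℓ+1)}` (1-based). -/
def seg (τ : Seg n) (ℓ : ℕ) : Finset (Fin n) :=
  Finset.univ.filter fun j => τ.t ℓ ≤ (j : ℕ) ∧ (j : ℕ) < τ.t (ℓ + 1)

/-- `Λ̲_τ`: normalized size of the smallest segment. -/
noncomputable def lamMin (τ : Seg n) : ℝ :=
  (((Finset.range τ.D).inf' (Finset.nonempty_range_iff.mpr τ.hD.ne')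
      fun ℓ => τ.t (ℓ + 1) - τ.t ℓ : ℕ) : ℝ) / n

/-- `Λ̄_τ`: normalized size of the largest segment. -/
noncomputable def lamMax (τ : Seg n) : ℝ :=
  (((Finset.range τ.D).sup' (Finset.nonempty_range_iff.mpr τ.hD.ne')
      fun ℓ => τ.t (ℓ + 1) - τ.t ℓ : ℕ) : ℝ) / n

/-- `d∞^{(1)}(τ¹,τ²) = max_{1 ≤ i ≤ D₁−1} min_{1 ≤ j ≤ D₂−1} |τ¹_i − τ²_j|`
(with natural conventions in the degenerate cases where a segmentation has no
interior change-point). -/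
noncomputable def dinf1 (τ1 τ2 : Seg n) : ℕ :=
  if h : 2 ≤ τ1.D ∧ 2 ≤ τ2.D then
    (Finset.Ioo 0 τ1.D).sup fun i =>
      (Finset.Ioo 0 τ2.D).inf' ⟨1, Finset.mem_Ioo.mpr ⟨Nat.one_pos, by omega⟩⟩
        fun j => Nat.dist (τ1.t i) (τ2.t j)
  else if τ1.D = τ2.D then 0 else n

/-- `d∞^{(2)}(τ¹,τ²) = max_{1 ≤ i ≤ D₁−1} min_{0 ≤ j ≤ D₂} |τ¹_i − τ²_j|`. -/
noncomputable def dinf2 (τ1 τ2 : Seg n) : ℕ :=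
  (Finset.Ioo 0 τ1.D).sup fun i =>
    (Finset.Icc 0 τ2.D).inf' ⟨0, Finset.mem_Icc.mpr ⟨le_rfl, Nat.zero_le _⟩⟩
      fun j => Nat.dist (τ1.t i) (τ2.t j)

/-- `d∞^{(3)}(τ¹,τ²) = max_{1 ≤ i ≤ D₁−1} |τ¹_i − τ²_i|` (meaningful when `D₁ = D₂`). -/
noncomputable def dinf3 (τ1 τ2 : Seg n) : ℕ :=
  (Finset.Ioo 0 τ1.D).sup fun i => Nat.dist (τ1.t i) (τ2.t i)

/-- `d_H^{(1)}`. -/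
noncomputable def dH1 (τ1 τ2 : Seg n) : ℕ := max (dinf1 τ1 τ2) (dinf1 τ2 τ1)

/-- `d_H^{(2)}`. -/
noncomputable def dH2 (τ1 τ2 : Seg n) : ℕ := max (dinf2 τ1 τ2) (dinf2 τ2 τ1)

/-- The matrix of the orthogonal projection `Π_τ`:
`(Π_τ)_{ij} = 1/|λ|` if `i, j` are in the same segment `λ` of `τ`, and `0` otherwise. -/
noncomputable def Pmat (τ : Seg n) : Fin n → Fin n → ℝ := fun i j =>
  ∑ ℓ ∈ Finset.range τ.D, if i ∈ τ.seg ℓ ∧ j ∈ τ.seg ℓ then ((τ.seg ℓ).card : ℝ)⁻¹ else 0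

/-- The Frobenius loss `d_F(τ¹,τ²) = ‖Π_{τ¹} − Π_{τ²}‖_F`. -/
noncomputable def dF (τ1 τ2 : Seg n) : ℝ :=
  Real.sqrt (∑ i, ∑ j, (Pmat τ1 i j - Pmat τ2 i j) ^ 2)

/-- The orthogonal projection `Π_τ : H^n → H^n` onto vectors constant on each segment
of `τ`: `(Π_τ x)_i` is the average of `x` over the segment of `τ` containing `i`. -/
noncomputable def proj {H : Type*} [AddCommGroup H] [Module ℝ H]
    (τ : Seg n) (x : Fin n → H) : Fin n → H := fun i =>
  ∑ ℓ ∈ Finset.range τ.D,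
    if τ.t ℓ ≤ (i : ℕ) ∧ (i : ℕ) < τ.t (ℓ + 1)
    then (((τ.t (ℓ + 1) - τ.t ℓ : ℕ) : ℝ))⁻¹ • ∑ j ∈ τ.seg ℓ, x j
    else 0

end Seg

/-- Squared norm on `H^n`: `‖x‖² = Σ_i ‖x_i‖²`. -/
noncomputable def hnorm2 {n : ℕ} {H : Type*} [NormedAddCommGroup H] (x : Fin n → H) : ℝ :=
  ∑ i, ‖x i‖ ^ 2

/-- Inner product on `H^n`: `⟨x, y⟩ = Σ_i ⟨x_i, y_i⟩_H`. -/
noncomputable def hinner {n : ℕ} {H : Type*} [NormedAddCommGroup H] [InnerProductSpace ℝ H]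
    (x y : Fin n → H) : ℝ := ∑ i, inner ℝ (x i) (y i)

/-- `τ` is the true segmentation of `m ∈ H^n`: `m` is constant on every segment of `τ`
and jumps at every interior change-point of `τ`. -/
def IsTrueSeg {n : ℕ} {H : Type*} (τ : Seg n) (m : Fin n → H) : Prop :=
  (∀ ℓ < τ.D, ∀ i ∈ τ.seg ℓ, ∀ j ∈ τ.seg ℓ, m i = m j) ∧
  ∀ ℓ, 0 < ℓ → ℓ < τ.D → ∀ (h1 : τ.t ℓ - 1 < n) (h2 : τ.t ℓ < n),
    m ⟨τ.t ℓ - 1, h1⟩ ≠ m ⟨τ.t ℓ, h2⟩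

/-- The size `‖μ*_{t ℓ + 1} − μ*_{t ℓ}‖` (paper indexing) of the jump of `m` at
the change-point `t ℓ` of `τ`. -/
noncomputable def jumpAt {n : ℕ} {H : Type*} [NormedAddCommGroup H]
    (τ : Seg n) (m : Fin n → H) (ℓ : ℕ) : ℝ :=
  if h : 0 < τ.t ℓ ∧ τ.t ℓ < n then ‖m ⟨τ.t ℓ, h.2⟩ - m ⟨τ.t ℓ - 1, by omega⟩‖ else 0

/-- `Δ̲`: size of the smallest jump of `m` (over the change-points of `τ`). -/
noncomputable def deltaMin {n : ℕ} {H : Type*} [NormedAddCommGroup H]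
    (τ : Seg n) (m : Fin n → H) : ℝ :=
  if h : 2 ≤ τ.D then
    (Finset.Ioo 0 τ.D).inf' ⟨1, Finset.mem_Ioo.mpr ⟨Nat.one_pos, by omega⟩⟩ (jumpAt τ m)
  else 0

/-- `Δ̄`: size of the largest jump of `m` (over the change-points of `τ`). -/
noncomputable def deltaMax {n : ℕ} {H : Type*} [NormedAddCommGroup H]
    (τ : Seg n) (m : Fin n → H) : ℝ :=
  if h : 2 ≤ τ.D then
    (Finset.Ioo 0 τ.D).sup' ⟨1, Finset.mem_Ioo.mpr ⟨Nat.one_pos, by omega⟩⟩ (jumpAt τ m)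
  else 0

/-- The value of `m` at the first index of the `ℓ`-th segment of `τ`; if `m` is constant
on each segment of `τ`, this is the common value `μ*_{λ_ℓ}` of `m` on that segment. -/
noncomputable def segVal {n : ℕ} {H : Type*} [AddCommGroup H]
    (τ : Seg n) (m : Fin n → H) (ℓ : ℕ) : H :=
  if h : τ.t ℓ < n then m ⟨τ.t ℓ, h⟩ else 0

/-- `M_n = max_{1 ≤ k ≤ n} ‖ε_1 + ⋯ + ε_k‖` (the value at `k = 0` is `0`, which does not
affect the maximum). -/
noncomputable def Mmax {n : ℕ} {H : Type*} [NormedAddCommGroup H] (ε : Fin n → H) : ℝ :=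
  (Finset.range (n + 1)).sup' (Finset.nonempty_range_iff.mpr (Nat.succ_ne_zero n))
    fun k => ‖∑ j ∈ Finset.univ.filter (fun j : Fin n => (j : ℕ) < k), ε j‖

/-!
Let `t = τ¹_i` be a change-point of `τ¹` realizing `d = d∞^{(1)}(τ¹,τ²)`. Every change-point
of `τ²` is at distance at least `d` from `t`, so (as `3 d < n Λ̲`) some segment `[s, s')` of `τ²`
satisfies `s + d ≤ t ≤ s' - d`; and every change-point of `τ¹` is within `d` of one of `τ²`, so
`s' - s ≤ n Λ̄ + 2 d`. On the blocks `[s, t) × [t, s')` and `[t, s') × [s, t)` the matrix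
`Π_{τ¹}` vanishes while `Π_{τ²} = 1 / (s' - s)`, whence
`d_F² ≥ 2 (t - s)(s' - t) / (s' - s)² ≥ 2 d / (3 n Λ̄)`.
-/

open Finset

theorem two_div_mul_le_two_mul_mul_div_add_sq {a b d M : ℝ} (hd : 0 ≤ d) (ha : d ≤ a)
    (hb : d ≤ b) (hM : 3 * d ≤ M) (hab : a + b ≤ M + 2 * d) :
    2 / (3 * M) * d ≤ 2 * (a * b) / (a + b) ^ 2 := by
  rcases hd.eq_or_lt with rfl | hd
  · rw [mul_zero]
    have := mul_nonneg ha hb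
    positivity
  rw [div_mul_eq_mul_div, div_le_div_iff₀ (by linarith) (by nlinarith)]
  -- `a b ≥ d (L - d)` for `L = a + b`, and `L² ≤ 3 M (L - d)` by concavity on `[2 d, M + 2 d]`
  have hprod : 0 ≤ (a - d) * (b - d) := mul_nonneg (by linarith) (by linarith)
  have hL : 0 ≤ (a + b - 2 * d) * (M + 2 * d - (a + b)) := mul_nonneg (by linarith) (by linarith)
  have hL' : 0 ≤ (a + b - 2 * d) * (2 * M - 4 * d) := mul_nonneg (by linarith) (by linarith)
  nlinarith [mul_nonneg (by linarith : (0 : ℝ) ≤ 3 * M) hprod, mul_nonneg hd.le hL,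
    mul_nonneg hd.le hL', mul_nonneg hd.le (mul_nonneg hd.le (by linarith : 0 ≤ 3 * M - 4 * d))]

theorem card_filter_fin_le_and_lt {n : ℕ} (a b : ℕ) (hb : b ≤ n) :
    #{p : Fin n | a ≤ (p : ℕ) ∧ (p : ℕ) < b} = b - a := by
  rw [← Nat.card_Ico]
  refine card_bij (fun p _ => (p : ℕ)) ?_ (fun p _ q _ => Fin.ext) ?_
  · intro p hp
    simpa using hp
  · intro m hm
    rw [mem_Ico] at hm
    exact ⟨⟨m, by omega⟩, by simpa using hm, rfl⟩

namespace Seg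

variable {n : ℕ}

section Basic

variable (τ : Seg n)

theorem strictMonoOn_t : StrictMonoOn τ.t (Set.Iic τ.D) :=
  strictMonoOn_Iic_of_lt_succ τ.hmono

theorem t_lt_t {a b : ℕ} (hab : a < b) (hb : b ≤ τ.D) : τ.t a < τ.t b :=
  τ.strictMonoOn_t (Set.mem_Iic.2 (hab.le.trans hb)) hb hab

theorem t_le_t {a b : ℕ} (hab : a ≤ b) (hb : b ≤ τ.D) : τ.t a ≤ τ.t b :=
  τ.strictMonoOn_t.monotoneOn (Set.mem_Iic.2 (hab.trans hb)) hb hab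

theorem n_pos (τ : Seg n) : 0 < n := by
  simpa [τ.h0, τ.hn] using τ.t_lt_t τ.hD le_rfl

theorem t_le_n {a : ℕ} (ha : a ≤ τ.D) : τ.t a ≤ n :=
  (τ.t_le_t ha le_rfl).trans_eq τ.hn

theorem exists_t_le_lt {x : ℕ} (hx : x < n) :
    ∃ k < τ.D, τ.t k ≤ x ∧ x < τ.t (k + 1) := by
  classical
  have hlast : x < τ.t (τ.D - 1 + 1) := by rwa [Nat.sub_add_cancel τ.hD, τ.hn]
  have hex : ∃ k, x < τ.t (k + 1) := ⟨τ.D - 1, hlast⟩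
  refine ⟨Nat.find hex, ?_, ?_, Nat.find_spec hex⟩
  · have := Nat.find_min' hex hlast
    have := τ.hD
    omega
  · rcases hk : Nat.find hex with _ | k
    · rw [τ.h0]; exact Nat.zero_le x
    · exact not_lt.1 (Nat.find_min hex (hk ▸ k.lt_add_one))

@[simp]
theorem mem_seg {ℓ : ℕ} {p : Fin n} :
    p ∈ τ.seg ℓ ↔ τ.t ℓ ≤ p ∧ (p : ℕ) < τ.t (ℓ + 1) := by
  simp [seg]

theorem card_seg {ℓ : ℕ} (hℓ : ℓ < τ.D) : #(τ.seg ℓ) = τ.t (ℓ + 1) - τ.t ℓ :=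
  card_filter_fin_le_and_lt _ _ (τ.t_le_n hℓ)

theorem eq_of_mem_seg_of_mem_seg {k ℓ : ℕ} {p : Fin n} (hk : k < τ.D) (hℓ : ℓ < τ.D)
    (hpk : p ∈ τ.seg k) (hpℓ : p ∈ τ.seg ℓ) : k = ℓ := by
  rw [mem_seg] at hpk hpℓ
  by_contra hne
  rcases Nat.lt_or_gt_of_ne hne with h | h
  · have := τ.t_le_t (a := k + 1) h hℓ.le
    omega
  · have := τ.t_le_t (a := ℓ + 1) h hk.le
    omega

theorem Pmat_comm (p q : Fin n) : τ.Pmat p q = τ.Pmat q p :=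
  sum_congr rfl fun _ _ => if_congr and_comm rfl rfl

theorem Pmat_of_mem_seg {k : ℕ} {p q : Fin n} (hk : k < τ.D) (hp : p ∈ τ.seg k)
    (hq : q ∈ τ.seg k) : τ.Pmat p q = ((τ.t (k + 1) - τ.t k : ℕ) : ℝ)⁻¹ := by
  rw [Pmat, sum_eq_single_of_mem k (mem_range.2 hk), if_pos ⟨hp, hq⟩, τ.card_seg hk]
  intro ℓ hℓ hℓk
  exact if_neg fun hpq => hℓk (τ.eq_of_mem_seg_of_mem_seg (mem_range.1 hℓ) hk hpq.1 hp)

theorem Pmat_eq_zero_of_lt_of_le {i : ℕ} {p q : Fin n} (hi : i ≤ τ.D) (hp : (p : ℕ) < τ.t i)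
    (hq : τ.t i ≤ q) : τ.Pmat p q = 0 := by
  refine sum_eq_zero fun ℓ hℓ => if_neg ?_
  rintro ⟨hpℓ, hqℓ⟩
  rw [mem_seg] at hpℓ hqℓ
  rcases Nat.lt_or_ge ℓ i with h | h
  · have := τ.t_le_t (a := ℓ + 1) h hi
    omega
  · have := τ.t_le_t h (mem_range.1 hℓ).le
    omega

def maxLen : ℕ :=
  (range τ.D).sup' (nonempty_range_iff.mpr τ.hD.ne') fun ℓ => τ.t (ℓ + 1) - τ.t ℓ

def minLen : ℕ :=
  (range τ.D).inf' (nonempty_range_iff.mpr τ.hD.ne') fun ℓ => τ.t (ℓ + 1) - τ.t ℓ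

theorem lamMax_eq : τ.lamMax = τ.maxLen / n := rfl

theorem lamMin_eq : τ.lamMin = τ.minLen / n := rfl

theorem sub_le_maxLen {ℓ : ℕ} (hℓ : ℓ < τ.D) : τ.t (ℓ + 1) - τ.t ℓ ≤ τ.maxLen :=
  le_sup' (fun ℓ => τ.t (ℓ + 1) - τ.t ℓ) (mem_range.2 hℓ)

theorem minLen_le_sub {ℓ : ℕ} (hℓ : ℓ < τ.D) : τ.minLen ≤ τ.t (ℓ + 1) - τ.t ℓ :=
  inf'_le (fun ℓ => τ.t (ℓ + 1) - τ.t ℓ) (mem_range.2 hℓ)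

theorem minLen_le_maxLen : τ.minLen ≤ τ.maxLen :=
  (τ.minLen_le_sub τ.hD).trans (τ.sub_le_maxLen τ.hD)

theorem minLen_le_t {i : ℕ} (hi0 : 0 < i) (hi : i ≤ τ.D) : τ.minLen ≤ τ.t i := by
  have h0 := τ.minLen_le_sub τ.hD
  rw [zero_add, τ.h0] at h0
  exact h0.trans (τ.t_le_t (a := 1) hi0 hi)

theorem t_add_minLen_le {i : ℕ} (hi : i < τ.D) : τ.t i + τ.minLen ≤ n := by
  have hlen := τ.minLen_le_sub hi
  have hlt := τ.t_lt_t (lt_add_one i) hi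
  have hle := τ.t_le_n (a := i + 1) hi
  omega

theorem exists_seg_around {x d : ℕ} (hx : x < n) (hdx : d ≤ x) (hxd : x + d ≤ n)
    (hfar : ∀ j, 0 < j → j < τ.D → d ≤ Nat.dist x (τ.t j)) :
    ∃ k < τ.D, τ.t k + d ≤ x ∧ x + d ≤ τ.t (k + 1) := by
  obtain ⟨k, hk, hkx, hxk⟩ := τ.exists_t_le_lt hx
  refine ⟨k, hk, ?_, ?_⟩
  · rcases Nat.eq_zero_or_pos k with rfl | hk0
    · rwa [τ.h0, zero_add]
    · have := hfar k hk0 hk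
      unfold Nat.dist at this
      omega
  · rcases (show k + 1 ≤ τ.D from hk).eq_or_lt with hkD | hkD
    · rwa [hkD, τ.hn]
    · have := hfar (k + 1) k.succ_pos hkD
      unfold Nat.dist at this
      omega

end Basic

section Dinf1

variable {τ1 τ2 : Seg n}

theorem two_le_D_of_dinf1_ne_zero (hD : τ1.D = τ2.D) (hd : dinf1 τ1 τ2 ≠ 0) :
    2 ≤ τ1.D ∧ 2 ≤ τ2.D := by
  by_contra h
  exact hd (by rw [dinf1, dif_neg h, if_pos hD])

theorem exists_dist_le_dinf1 (h : 2 ≤ τ1.D ∧ 2 ≤ τ2.D) {i : ℕ} (hi0 : 0 < i)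
    (hi : i < τ1.D) :
    ∃ j, 0 < j ∧ j < τ2.D ∧ Nat.dist (τ1.t i) (τ2.t j) ≤ dinf1 τ1 τ2 := by
  have hne : (Ioo 0 τ2.D).Nonempty := ⟨1, mem_Ioo.2 ⟨one_pos, h.2⟩⟩
  obtain ⟨j, hj, hjeq⟩ := exists_mem_eq_inf' hne fun j => Nat.dist (τ1.t i) (τ2.t j)
  rw [mem_Ioo] at hj
  refine ⟨j, hj.1, hj.2, ?_⟩
  rw [dinf1, dif_pos h, ← hjeq]
  exact le_sup (f := fun i => (Ioo 0 τ2.D).inf' hne fun j => Nat.dist (τ1.t i) (τ2.t j))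
    (mem_Ioo.2 ⟨hi0, hi⟩)

theorem exists_dinf1_le_dist (h : 2 ≤ τ1.D ∧ 2 ≤ τ2.D) :
    ∃ i, 0 < i ∧ i < τ1.D ∧
      ∀ j, 0 < j → j < τ2.D → dinf1 τ1 τ2 ≤ Nat.dist (τ1.t i) (τ2.t j) := by
  have hne : (Ioo 0 τ2.D).Nonempty := ⟨1, mem_Ioo.2 ⟨one_pos, h.2⟩⟩
  obtain ⟨i, hi, hieq⟩ := exists_mem_eq_sup (Ioo 0 τ1.D) ⟨1, mem_Ioo.2 ⟨one_pos, h.1⟩⟩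
    fun i => (Ioo 0 τ2.D).inf' hne fun j => Nat.dist (τ1.t i) (τ2.t j)
  rw [mem_Ioo] at hi
  refine ⟨i, hi.1, hi.2, fun j hj0 hj => ?_⟩
  rw [dinf1, dif_pos h, hieq]
  exact inf'_le _ (mem_Ioo.2 ⟨hj0, hj⟩)

end Dinf1

/-- The `τ1`-segment through `τ2.t k + d` ends at `n` or within `d` of a change-point of `τ2`,
which must lie to the right of `τ2.t k`. -/
theorem sub_le_maxLen_add {τ1 τ2 : Seg n} {d k : ℕ} (hk : k < τ2.D)
    (hclose : ∀ i, 0 < i → i < τ1.D → ∃ j ≤ τ2.D, Nat.dist (τ1.t i) (τ2.t j) ≤ d) :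
    τ2.t (k + 1) - τ2.t k ≤ τ1.maxLen + 2 * d := by
  have hs' := τ2.t_le_n (a := k + 1) hk
  by_cases hsd : τ2.t k + d < n
  swap
  · omega
  obtain ⟨p, hp, hpa, hpb⟩ := τ1.exists_t_le_lt hsd
  have hlen := τ1.sub_le_maxLen hp
  rcases (show p + 1 ≤ τ1.D from hp).eq_or_lt with hpD | hpD
  · rw [hpD, τ1.hn] at hpb hlen
    omega
  obtain ⟨j, hj, hdist⟩ := hclose (p + 1) p.succ_pos hpD
  unfold Nat.dist at hdist
  have hkj : k + 1 ≤ j := by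
    by_contra! hjk
    have := τ2.t_le_t (Nat.le_of_lt_succ hjk) hk.le
    omega
  have := τ2.t_le_t hkj hj
  omega

theorem dF_sq (τ1 τ2 : Seg n) :
    dF τ1 τ2 ^ 2 = ∑ p, ∑ q, (τ1.Pmat p q - τ2.Pmat p q) ^ 2 :=
  Real.sq_sqrt (sum_nonneg fun _ _ => sum_nonneg fun _ _ => sq_nonneg _)

theorem le_dF_sq_of_t_mem_Icc {τ1 τ2 : Seg n} {i k : ℕ} (hi : i ≤ τ1.D) (hk : k < τ2.D)
    (hs : τ2.t k ≤ τ1.t i) (hs' : τ1.t i ≤ τ2.t (k + 1)) :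
    2 * (((τ1.t i - τ2.t k : ℕ) : ℝ) * ((τ2.t (k + 1) - τ1.t i : ℕ) : ℝ)) /
      (((τ1.t i - τ2.t k : ℕ) : ℝ) + ((τ2.t (k + 1) - τ1.t i : ℕ) : ℝ)) ^ 2 ≤
      dF τ1 τ2 ^ 2 := by
  set s := τ2.t k
  set s' := τ2.t (k + 1)
  set t := τ1.t i
  have hs'n : s' ≤ n := τ2.t_le_n (a := k + 1) hk
  set I : Finset (Fin n) := {p | s ≤ (p : ℕ) ∧ (p : ℕ) < t}
  set J : Finset (Fin n) := {p | t ≤ (p : ℕ) ∧ (p : ℕ) < s'}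
  have hIJ : Disjoint I J := disjoint_filter.2 fun p _ hp hq => by omega
  have hlen : ((s' - s : ℕ) : ℝ) = ((t - s : ℕ) : ℝ) + ((s' - t : ℕ) : ℝ) := by
    rw [← Nat.cast_add]
    congr 1
    omega
  have hentry : ∀ x ∈ I ×ˢ J ∪ J ×ˢ I,
      (((s' - s : ℕ) : ℝ)⁻¹) ^ 2 ≤ (τ1.Pmat x.1 x.2 - τ2.Pmat x.1 x.2) ^ 2 := by
    rintro ⟨p, q⟩ hpq
    have hseg : p ∈ τ2.seg k ∧ q ∈ τ2.seg k := by
      simp only [I, J, mem_union, mem_product, mem_filter, mem_univ, true_and] at hpq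
      simp only [mem_seg]
      omega
    have hP1 : τ1.Pmat p q = 0 := by
      simp only [I, J, mem_union, mem_product, mem_filter, mem_univ, true_and] at hpq
      rcases hpq with ⟨hp, hq⟩ | ⟨hp, hq⟩
      · exact τ1.Pmat_eq_zero_of_lt_of_le hi hp.2 hq.1
      · rw [Pmat_comm]
        exact τ1.Pmat_eq_zero_of_lt_of_le hi hq.2 hp.1
    rw [hP1, τ2.Pmat_of_mem_seg hk hseg.1 hseg.2, zero_sub, neg_sq]
  calc 2 * (((t - s : ℕ) : ℝ) * ((s' - t : ℕ) : ℝ)) /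
        (((t - s : ℕ) : ℝ) + ((s' - t : ℕ) : ℝ)) ^ 2
      = #(I ×ˢ J ∪ J ×ˢ I) • (((s' - s : ℕ) : ℝ)⁻¹) ^ 2 := by
        rw [card_union_of_disjoint (disjoint_product.2 (Or.inl hIJ)), card_product, card_product,
          card_filter_fin_le_and_lt s t (hs'.trans hs'n), card_filter_fin_le_and_lt t s' hs'n, hlen,
          nsmul_eq_mul, inv_pow, div_eq_mul_inv]
        push_cast
        ring
    _ ≤ ∑ x ∈ I ×ˢ J ∪ J ×ˢ I, (τ1.Pmat x.1 x.2 - τ2.Pmat x.1 x.2) ^ 2 :=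
        card_nsmul_le_sum _ _ _ hentry
    _ ≤ ∑ x : Fin n × Fin n, (τ1.Pmat x.1 x.2 - τ2.Pmat x.1 x.2) ^ 2 :=
        sum_le_univ_sum_of_nonneg fun _ => sq_nonneg _
    _ = dF τ1 τ2 ^ 2 := by
        rw [dF_sq, ← Fintype.sum_prod_type' fun p q => (τ1.Pmat p q - τ2.Pmat p q) ^ 2]

end Seg

/-- Proposition 3.5, lower bound: if `D_{τ¹} = D_{τ²}` and
`(1/n) d∞^{(1)}(τ¹,τ²) < Λ̲_{τ¹}/3`, then
`(2 / (3 Λ̄_{τ¹})) · (1/n) d∞^{(1)}(τ¹,τ²) ≤ d_F(τ¹,τ²)²`. -/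
theorem dinf1_le_dF_sq {n : ℕ} (τ1 τ2 : Seg n) (hD : τ1.D = τ2.D)
    (h : (Seg.dinf1 τ1 τ2 : ℝ) / n < Seg.lamMin τ1 / 3) :
    2 / (3 * Seg.lamMax τ1) * ((Seg.dinf1 τ1 τ2 : ℝ) / n) ≤ (Seg.dF τ1 τ2) ^ 2 := by
  set d := Seg.dinf1 τ1 τ2
  rcases Nat.eq_zero_or_pos d with hd | hd
  · simp only [hd, CharP.cast_eq_zero, zero_div, mul_zero]
    positivity
  have hD2 := Seg.two_le_D_of_dinf1_ne_zero hD hd.ne'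
  have hn : (0 : ℝ) < n := Nat.cast_pos.2 τ1.n_pos
  have h3d : 3 * d < τ1.minLen := by
    rw [Seg.lamMin_eq] at h
    field_simp at h
    exact_mod_cast (by linarith : (3 * d : ℝ) < τ1.minLen)
  obtain ⟨i, hi0, hi, hfar⟩ := Seg.exists_dinf1_le_dist hD2
  have hleft := τ1.minLen_le_t hi0 hi.le
  have hright := τ1.t_add_minLen_le hi
  obtain ⟨k, hk, hs, hs'⟩ := τ2.exists_seg_around (by omega) (by omega) (by omega) hfar
  have hlen := Seg.sub_le_maxLen_add (τ1 := τ1) (d := d) hk fun _ h0 hlt =>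
    let ⟨j, _, hj, hdist⟩ := Seg.exists_dist_le_dinf1 hD2 h0 hlt
    ⟨j, hj.le, hdist⟩
  have hscale : 2 / (3 * τ1.lamMax) * ((d : ℝ) / n) = 2 / (3 * τ1.maxLen) * d := by
    rw [Seg.lamMax_eq]
    field_simp
  rw [hscale]
  have hminmax := τ1.minLen_le_maxLen
  refine (two_div_mul_le_two_mul_mul_div_add_sq d.cast_nonneg ?_ ?_ ?_ ?_).trans
    (Seg.le_dF_sq_of_t_mem_Icc hi.le hk (by omega) (by omega))
  all_goals norm_cast; omega
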